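/- arXiv:1810.01292 — 3 statements merged into one kernel-verified Lean document; each statement's English description precedes it below -/
import Mathlib

section
/- For integers $n, p$ with $3 \leq p$ and $p \leq \frac{2}{5}n - 1$ (so $n \geq \frac{5(p+1)}{2}$), the polynomial value $F_{n,p}(1) = 256 n^6 p^2-768 n^6 p-1024 n^5 p^3+1024 n^5 p^2+6784 n^5 p-384 n^5+1024 n^4 p^4+4608 n^4 p^3-20480 n^4 p^2-19456 n^4 p+1792 n^4+1024 n^3 p^5-11776 n^3 p^4+12032 n^3 p^3+66944 n^3 p^2+21376 n^3 p-2304 n^3-2048 n^2 p^6+5120 n^2 p^5+21248 n^2 p^4-69120 n^2 p^3-79552 n^2 p^2-7296 n^2 p+576 n^2+7168 n p^6-28160 n p^5+13568 n p^4+79232 n p^3+31488 n p^2+1152 n p+1024 p^8-6144 p^7+8704 p^6+9216 p^5-22976 p^4-20352 p^3-4032 p^2$ is strictly positive. -/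
set_option maxHeartbeats 2000000

noncomputable section

/-- Coefficients of the degree-8 Gröbner basis polynomial `F_{n,p}(u₁)` from the paper. -/
def Fc8 (n p : ℤ) : ℝ :=
  let N : ℝ := (n : ℝ); let P : ℝ := (p : ℝ);
  (2*N-P-1)^4*(P-2)^2*(P+1)^2

def Fc7 (n p : ℤ) : ℝ :=
  let N : ℝ := (n : ℝ); let P : ℝ := (p : ℝ);
  -2*(2*N-P-1)^3*(P-2)*(P+1)*(-10*P^3+N*P^2+25*P^2-20*P+4*N)

def Fc6 (n p : ℤ) : ℝ :=
  let N : ℝ := (n : ℝ); let P : ℝ := (p : ℝ);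
  -2*(2*N-P-1)*(-182*P^7-83*N*P^6+1407*P^6+505*N^2*P^5-1587*N*P^5-2570*P^5
      -284*N^3*P^4-603*N^2*P^4+5381*N*P^4+504*P^4+36*N^4*P^3+710*N^3*P^3
      -1440*N^2*P^3-4595*N*P^3+1377*P^3-64*N^4*P^2-616*N^3*P^2+2768*N^2*P^2
      -250*N*P^2+202*P^2+32*N^4*P+48*N^3*P-688*N^2*P+344*N*P-480*P
      +32*N^4-112*N^3+112*N^2+64*N+32)

def Fc5 (n p : ℤ) : ℝ :=
  let N : ℝ := (n : ℝ); let P : ℝ := (p : ℝ);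
  (2*N-P-1)^2*(140*P^6-10*N*P^5-726*P^5-99*N^2*P^4+414*N*P^4+1057*P^4
      +44*N^3*P^3+68*N^2*P^3-930*N*P^3-178*P^3-112*N^3*P^2+312*N^2*P^2
      +420*N*P^2-596*P^2+80*N^3*P-208*N^2*P-280*N*P+816*P
      -64*N^3+272*N^2-304*N-64)

def Fc4 (n p : ℤ) : ℝ :=
  let N : ℝ := (n : ℝ); let P : ℝ := (p : ℝ);
  46*P^8+1262*N*P^7-2706*P^7-2685*N^2*P^6+2570*N*P^6+7173*P^6
      +828*N^3*P^5+10434*N^2*P^5-31616*N*P^5+5706*P^5+1996*N^4*P^4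
      -20068*N^3*P^4+34511*N^2*P^4+15458*N*P^4-15743*P^4-1728*N^5*P^3
      +9248*N^4*P^3+7624*N^3*P^3-75052*N^2*P^3+63050*N*P^3-14418*P^3
      +384*N^6*P^2+864*N^5*P^2-22832*N^4*P^2+65888*N^3*P^2-54384*N^2*P^2
      +16444*N*P^2-1358*P^2-896*N^6*P+6336*N^5*P-12288*N^4*P+2384*N^3*P
      +7616*N^2*P-6256*N*P+1784*P+256*N^6-2048*N^5+5632*N^4-6624*N^3
      +4336*N^2-1632*N+248

def Fc3 (n p : ℤ) : ℝ :=
  let N : ℝ := (n : ℝ); let P : ℝ := (p : ℝ);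
  -2*(-330*P^8+137*N*P^7+2129*P^7+852*N^2*P^6-4328*N*P^6-2144*P^6
      -1120*N^3*P^5+2522*N^2*P^5+6676*N*P^5-2146*P^5+704*N^4*P^4
      -1288*N^3*P^4-2508*N^2*P^4-4002*N*P^4+5788*P^4-304*N^5*P^3
      +1096*N^4*P^3-2600*N^3*P^3+10706*N^2*P^3-14817*N*P^3+3701*P^3
      +64*N^6*P^2-224*N^5*P^2+1104*N^4*P^2-6616*N^3*P^2+13188*N^2*P^2
      -6654*N*P^2+1114*P^2-64*N^6*P-128*N^5*P+3008*N^4*P-8600*N^3*P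
      +8552*N^2*P-4428*N*P+1000*P+128*N^6-1024*N^5+2944*N^4-3952*N^3
      +3024*N^2-1288*N+256)

def Fc2 (n p : ℤ) : ℝ :=
  let N : ℝ := (n : ℝ); let P : ℝ := (p : ℝ);
  444*P^8-782*N*P^7-1226*P^7+363*N^2*P^6+2566*N*P^6-121*P^6
      +232*N^3*P^5-2758*N^2*P^5+708*N*P^5+1854*P^5-292*N^4*P^4
      +1524*N^3*P^4+447*N^2*P^4-5066*N*P^4+439*P^4+80*N^5*P^3
      -160*N^4*P^3-1948*N^3*P^3+5916*N^2*P^3-1638*N*P^3-646*P^3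
      -96*N^5*P^2+896*N^4*P^2-1760*N^3*P^2-1512*N^2*P^2+4028*N*P^2
      -1020*P^2-320*N^4*P+1792*N^3*P-2768*N^2*P+600*N*P+80*P
      -224*N^3+896*N^2-848*N+320

def Fc1 (n p : ℤ) : ℝ :=
  let N : ℝ := (n : ℝ); let P : ℝ := (p : ℝ);
  2*(3*P^2-2*N*P+P-2)*(18*P^6-35*N*P^5-5*P^5+31*N^2*P^4-17*N*P^4-10*P^4
      -16*N^3*P^3+37*N^2*P^3-25*N*P^3+62*P^3+4*N^4*P^2-18*N^3*P^2
      +26*N^2*P^2-53*N*P^2+9*P^2+4*N^3*P-16*N^2*P+44*N*P-56*P+16)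

def Fc0 (n p : ℤ) : ℝ :=
  let N : ℝ := (n : ℝ); let P : ℝ := (p : ℝ);
  (P^2-N*P+P-1)^2*(3*P^2-2*N*P+P-2)^2

/-- The degree-8 Gröbner basis polynomial `F_{n,p}(u₁)` from the paper. -/
def Fpoly (n p : ℤ) (u : ℝ) : ℝ :=
  Fc8 n p * u^8 + Fc7 n p * u^7 + Fc6 n p * u^6 + Fc5 n p * u^5 + Fc4 n p * u^4
    + Fc3 n p * u^3 + Fc2 n p * u^2 + Fc1 n p * u + Fc0 n p

end

theorem Fpoly_at_one_pos (n p : ℤ) (hp : 3 ≤ p) (hnp : 5 * (p + 1) ≤ 2 * n) :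
    Fpoly n p 1 =
      ((256*n^6*p^2-768*n^6*p-1024*n^5*p^3+1024*n^5*p^2+6784*n^5*p-384*n^5
        +1024*n^4*p^4+4608*n^4*p^3-20480*n^4*p^2-19456*n^4*p+1792*n^4
        +1024*n^3*p^5-11776*n^3*p^4+12032*n^3*p^3+66944*n^3*p^2+21376*n^3*p-2304*n^3
        -2048*n^2*p^6+5120*n^2*p^5+21248*n^2*p^4-69120*n^2*p^3-79552*n^2*p^2
        -7296*n^2*p+576*n^2+7168*n*p^6-28160*n*p^5+13568*n*p^4+79232*n*p^3
        +31488*n*p^2+1152*n*p+1024*p^8-6144*p^7+8704*p^6+9216*p^5-22976*p^4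
        -20352*p^3-4032*p^2 : ℤ) : ℝ) ∧
    0 < Fpoly n p 1 := by
  set m : ℤ := 2*n - 5*p - 5 with hm'
  set q : ℤ := p - 3 with hq'
  have heq : Fpoly n p 1 = (((256*n^6*p^2-768*n^6*p-1024*n^5*p^3+1024*n^5*p^2+6784*n^5*p-384*n^5         +1024*n^4*p^4+4608*n^4*p^3-20480*n^4*p^2-19456*n^4*p+1792*n^4         +1024*n^3*p^5-11776*n^3*p^4+12032*n^3*p^3+66944*n^3*p^2+21376*n^3*p-2304*n^3         -2048*n^2*p^6+5120*n^2*p^5+21248*n^2*p^4-69120*n^2*p^3-79552*n^2*p^2         -7296*n^2*p+576*n^2+7168*n*p^6-28160*n*p^5+13568*n*p^4+79232*n*p^3         +31488*n*p^2+1152*n*p+1024*p^8-6144*p^7+8704*p^6+9216*p^5-22976*p^4         -20352*p^3-4032*p^2 : ℤ)) : ℝ) := by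
    simp only [Fpoly, Fc8, Fc7, Fc6, Fc5, Fc4, Fc3, Fc2, Fc1, Fc0]
    push_cast
    ring
  refine ⟨heq, ?_⟩
  rw [heq]
  have hzgoal : ∀ z : ℤ, 0 < z → (0:ℝ) < (z:ℝ) := fun z hz => by exact_mod_cast hz
  apply hzgoal
  have hm : (0:ℤ) ≤ m := by omega
  have hq : (0:ℤ) ≤ q := by omega
  have key : 64 * ((256*n^6*p^2-768*n^6*p-1024*n^5*p^3+1024*n^5*p^2+6784*n^5*p-384*n^5         +1024*n^4*p^4+4608*n^4*p^3-20480*n^4*p^2-19456*n^4*p+1792*n^4         +1024*n^3*p^5-11776*n^3*p^4+12032*n^3*p^3+66944*n^3*p^2+21376*n^3*p-2304*n^3         -2048*n^2*p^6+5120*n^2*p^5+21248*n^2*p^4-69120*n^2*p^3-79552*n^2*p^2         -7296*n^2*p+576*n^2+7168*n*p^6-28160*n*p^5+13568*n*p^4+79232*n*p^3         +31488*n*p^2+1152*n*p+1024*p^8-6144*p^7+8704*p^6+9216*p^5-22976*p^4         -20352*p^3-4032*p^2)) = 497287168 + 4031774720*q + 6940786688*q^2 + 5613330432*q^3 + 2578195456*q^4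 + 714644480*q^5 + 118839552*q^6 + 10947328*q^7 + 430336*q^8 + 229965824*m + 1899659264*m*q + 2849488896*m*q^2 + 1924361216*m*q^3 + 705263616*m*q^4 + 145907968*m*q^5 + 16073216*m*q^6 + 734720*m*q^7 + 42110976*m^2 + 367194112*m^2*q + 471552000*m^2*q^2 + 257678336*m^2*q^3 + 71275008*m^2*q^4 + 9866496*m^2*q^5 + 544512*m^2*q^6 + 3829760*m^3 + 37362688*m^3*q + 39824384*m^3*q^2 + 16652800*m^3*q^3 + 3116032*m^3*q^4 + 218112*m^3*q^5 + 173056*m^4 + 2111488*m^4*q + 1770752*m^4*q^2 + 509184*m^4*q^3 + 48896*m^4*q^4 + 3072*m^5 + 62720*m^5*q + 37376*m^5*q^2 + 5632*m^5*q^3 + 768*m^6*q + 256*m^6*q^2 := by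
    simp only [hm', hq']; ring
  nlinarith [pow_nonneg hq 1, pow_nonneg hq 2, pow_nonneg hq 3, pow_nonneg hq 4, pow_nonneg hq 5, pow_nonneg hq 6, pow_nonneg hq 7, pow_nonneg hq 8, pow_nonneg hm 1, mul_nonneg (pow_nonneg hm 1) (pow_nonneg hq 1), mul_nonneg (pow_nonneg hm 1) (pow_nonneg hq 2), mul_nonneg (pow_nonneg hm 1) (pow_nonneg hq 3), mul_nonneg (pow_nonneg hm 1) (pow_nonneg hq 4), mul_nonneg (pow_nonneg hm 1) (pow_nonneg hq 5), mul_nonneg (pow_nonneg hm 1) (pow_nonneg hq 6), mul_nonneg (pow_nonneg hm 1) (pow_nonneg hq 7), pow_nonneg hm 2, mul_nonneg (pow_nonneg hm 2) (pow_nonneg hq 1), mul_nonneg (pow_nonneg hm 2) (pow_nonneg hq 2), mul_nonneg (pow_nonneg hm 2) (pow_nonneg hq 3), mul_nonneg (pow_nonneg hm 2) (pow_nonneg hq 4), mul_nonneg (pow_nonneg hm 2) (pow_nonneg hq 5), mul_nonneg (pow_nonneg hm 2) (pow_nonneg hq 6), pow_nonneg hm 3, mul_nonneg (pow_nonneg hm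 3) (pow_nonneg hq 1), mul_nonneg (pow_nonneg hm 3) (pow_nonneg hq 2), mul_nonneg (pow_nonneg hm 3) (pow_nonneg hq 3), mul_nonneg (pow_nonneg hm 3) (pow_nonneg hq 4), mul_nonneg (pow_nonneg hm 3) (pow_nonneg hq 5), pow_nonneg hm 4, mul_nonneg (pow_nonneg hm 4) (pow_nonneg hq 1), mul_nonneg (pow_nonneg hm 4) (pow_nonneg hq 2), mul_nonneg (pow_nonneg hm 4) (pow_nonneg hq 3), mul_nonneg (pow_nonneg hm 4) (pow_nonneg hq 4), pow_nonneg hm 5, mul_nonneg (pow_nonneg hm 5) (pow_nonneg hq 1), mul_nonneg (pow_nonneg hm 5) (pow_nonneg hq 2), mul_nonneg (pow_nonneg hm 5) (pow_nonneg hq 3), mul_nonneg (pow_nonneg hm 6) (pow_nonneg hq 1), mul_nonneg (pow_nonneg hm 6) (pow_nonneg hq 2)]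
end

section
/- For all integers $n, p$ with $2 \le p < n$, one has $F_{n,p}(0) = (p^2 - np + p - 1)^2 (3p^2 - 2np + p - 2)^2 \geq 0$; moreover if $p \le \frac{2}{5}n - 1$ then $F_{n,p}(0) > 0$. -/
set_option maxHeartbeats 2000000

theorem Fpoly_at_zero (n p : ℤ) (hp : 2 ≤ p) (hpn : p < n) :
    (Fpoly n p 0 =
      ((p:ℝ)^2 - (n:ℝ)*(p:ℝ) + (p:ℝ) - 1)^2 * (3*(p:ℝ)^2 - 2*(n:ℝ)*(p:ℝ) + (p:ℝ) - 2)^2) ∧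
    0 ≤ Fpoly n p 0 ∧
    (5 * (p + 1) ≤ 2 * n → 0 < Fpoly n p 0) := by
  have hP : (2:ℝ) ≤ (p:ℝ) := by exact_mod_cast hp
  have hN : (p:ℝ) < (n:ℝ) := by exact_mod_cast hpn
  have heq : Fpoly n p 0 =
      ((p:ℝ)^2 - (n:ℝ)*(p:ℝ) + (p:ℝ) - 1)^2 * (3*(p:ℝ)^2 - 2*(n:ℝ)*(p:ℝ) + (p:ℝ) - 2)^2 := by
    simp only [Fpoly, Fc0]
    ring
  refine ⟨heq, heq ▸ by positivity, fun h5 => ?_⟩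
  have h5' : 5*((p:ℝ)+1) ≤ 2*(n:ℝ) := by exact_mod_cast h5
  rw [heq]
  have h1 : (p:ℝ)^2 - (n:ℝ)*(p:ℝ) + (p:ℝ) - 1 < 0 := by nlinarith
  have h2 : 3*(p:ℝ)^2 - 2*(n:ℝ)*(p:ℝ) + (p:ℝ) - 2 < 0 := by nlinarith
  exact mul_pos (pow_pos (neg_pos.mpr h1) 2 |>.trans_eq (by ring))
    (pow_pos (neg_pos.mpr h2) 2 |>.trans_eq (by ring))
end

section
/- The polynomial $F_{31,12}(u_1) = 24356284225 u_1^8+71363530420 u_1^7+235478881736 u_1^6+125628595904 u_1^5+221500487082 u_1^4-235075487612 u_1^3+75786327156 u_1^2-12840182320 u_1+1073676289$ has at least two distinct positive real roots. -/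
theorem F_31_12_two_positive_roots :
    ∃ x y : ℝ, 0 < x ∧ 0 < y ∧ x ≠ y ∧
      (24356284225 * x^8 + 71363530420 * x^7 + 235478881736 * x^6 + 125628595904 * x^5 +
        221500487082 * x^4 - 235075487612 * x^3 + 75786327156 * x^2 - 12840182320 * x +
        1073676289 = 0) ∧
      (24356284225 * y^8 + 71363530420 * y^7 + 235478881736 * y^6 + 125628595904 * y^5 +
        221500487082 * y^4 - 235075487612 * y^3 + 75786327156 * y^2 - 12840182320 * y +
        1073676289 = 0) := by
  set f : ℝ → ℝ := fun u => 24356284225 * u^8 + 71363530420 * u^7 + 235478881736 * u^6 +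
    125628595904 * u^5 + 221500487082 * u^4 - 235075487612 * u^3 + 75786327156 * u^2 -
    12840182320 * u + 1073676289 with hf
  have hcont : Continuous f := by fun_prop
  have h0 : f 0 = 1073676289 := by norm_num [hf]
  have hq : f (1/4) = -1483773794159/65536 := by norm_num [hf]
  have h1 : f 1 = 507272112880 := by norm_num [hf]
  have hx : ∃ x ∈ Set.Ioo (0:ℝ) (1/4), f x = 0 := by
    have := intermediate_value_Ioo' (a := (0:ℝ)) (b := 1/4) (by norm_num)
      (hcont.continuousOn (s := Set.Icc 0 (1/4)))
    exact this ⟨by rw [hq]; norm_num, by rw [h0]; norm_num⟩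
  have hy : ∃ y ∈ Set.Ioo (1/4 : ℝ) 1, f y = 0 := by
    have := intermediate_value_Ioo (a := (1/4:ℝ)) (b := 1) (by norm_num)
      (hcont.continuousOn (s := Set.Icc (1/4) 1))
    exact this ⟨by rw [hq]; norm_num, by rw [h1]; norm_num⟩
  obtain ⟨x, ⟨hx0, hx4⟩, hxr⟩ := hx
  obtain ⟨y, ⟨hy4, hy1⟩, hyr⟩ := hy
  exact ⟨x, y, hx0, lt_trans (by norm_num) hy4, ne_of_lt (lt_trans hx4 hy4), hxr, hyr⟩
end
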